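/- arXiv:1908.09767 — 2 statements merged into one kernel-verified Lean document; each statement's English description precedes it below -/
import Mathlib

section
/- Define ℓ(k) = padicValNat 2 k + 1 for k ≥ 1 and r_n = ∑_{k=1}^{n} ℓ(k). Then for every m ≥ 1, the set {r_n : n ∈ ℕ, ℓ(n) = m} has strictly positive lower density in ℕ; in fact its lower density is at least 2^{−m−1}. -/
/-!
The integers `n = 2^(m-1) (2j+1)` are exactly those with `ℓ(n) = m`. Since
`r n = n + v₂(n!)` and Legendre's formula gives `v₂(n!) < n`, we have `r n < 2n`, so the
`⌊N / 2^(m+1)⌋` values `r (2^(m-1) (2j+1))` with `2^m (2j+1) ≤ N` are distinct elements of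
the set lying in `[0, N]`. Dividing by `N + 1` and letting `N → ∞` gives the bound `2^(-m-1)`.
-/

open scoped Classical

def ell (k : ℕ) : ℕ := padicValNat 2 k + 1

def r (n : ℕ) : ℕ := ∑ k ∈ Finset.Icc 1 n, ell k

noncomputable def lowerDensity (A : Set ℕ) : ℝ :=
  Filter.atTop.liminf fun N : ℕ =>
    (((Finset.range (N + 1)).filter (fun n => n ∈ A)).card : ℝ) / (N + 1)

noncomputable def upperDensity (A : Set ℕ) : ℝ :=
  Filter.atTop.limsup fun N : ℕ =>
    (((Finset.range (N + 1)).filter (fun n => n ∈ A)).card : ℝ) / (N + 1)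

open Finset Filter Topology

open scoped Nat

lemma r_succ (n : ℕ) : r (n + 1) = r n + ell (n + 1) :=
  sum_Icc_succ_top (Nat.le_add_left 1 n) ell

lemma r_strictMono : StrictMono r :=
  strictMono_nat_of_lt_succ fun n => by simp [r_succ, ell]

lemma r_eq_add_padicValNat_factorial (n : ℕ) : r n = n + padicValNat 2 n ! := by
  induction n with
  | zero => simp [r]
  | succ n ih =>
    rw [r_succ, ih, Nat.factorial_succ, padicValNat.mul n.succ_ne_zero n.factorial_ne_zero, ell]
    ring

lemma r_lt_two_mul {n : ℕ} (hn : n ≠ 0) : r n < 2 * n := by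
  have := padicValNat_factorial_lt_of_ne_zero 2 hn
  rw [r_eq_add_padicValNat_factorial]
  omega

lemma ell_two_pow_mul_odd (k j : ℕ) : ell (2 ^ k * (2 * j + 1)) = k + 1 := by
  rw [ell, padicValNat.mul (by positivity) (by omega), padicValNat.prime_pow,
    padicValNat.eq_zero_of_not_dvd (by omega)]

lemma div_le_card_filter_r_of_ell_eq (k N : ℕ) :
    N / 2 ^ (k + 2) ≤
      ((range (N + 1)).filter (· ∈ {x | ∃ n : ℕ, 0 < n ∧ ell n = k + 1 ∧ r n = x})).card := by
  calc N / 2 ^ (k + 2) = (range (N / 2 ^ (k + 2))).card := (card_range _).symm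
    _ ≤ _ := card_le_card_of_injOn (fun j => r (2 ^ k * (2 * j + 1))) ?_ ?_
  · intro j hj
    rw [coe_range, Set.mem_Iio] at hj
    have hn : 2 ^ k * (2 * j + 1) ≠ 0 := by positivity
    have h2n : 2 * (2 ^ k * (2 * j + 1)) ≤ N := by
      have := (Nat.le_div_iff_mul_le (by positivity)).1 hj
      rw [pow_add] at this
      nlinarith [pow_pos (two_pos (α := ℕ)) k]
    rw [coe_filter]
    exact ⟨mem_range.2 (Nat.lt_succ_of_lt ((r_lt_two_mul hn).trans_le h2n)), _,
      Nat.pos_of_ne_zero hn, ell_two_pow_mul_odd k j, rfl⟩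
  · intro a _ b _ hab
    have := Nat.eq_of_mul_eq_mul_left (by positivity) (r_strictMono.injective hab)
    omega

lemma inv_le_lowerDensity_of_div_le_card {A : Set ℕ} {q : ℕ} (hq : 0 < q)
    (hA : ∀ N, N / q ≤ ((range (N + 1)).filter (· ∈ A)).card) :
    (q : ℝ)⁻¹ ≤ lowerDensity A := by
  set f : ℕ → ℝ := fun N => (((range (N + 1)).filter (· ∈ A)).card : ℝ) / (N + 1)
  set g : ℕ → ℝ := fun N => (q : ℝ)⁻¹ - 1 / (N + 1)
  have hgf : ∀ N, g N ≤ f N := by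
    intro N
    have hN : ((N + 1 : ℕ) : ℝ) ≤ (N / q * q + q : ℕ) := by
      exact_mod_cast Nat.lt_div_mul_add hq
    have hcard : ((N / q : ℕ) : ℝ) ≤ ((range (N + 1)).filter (· ∈ A)).card := by
      exact_mod_cast hA N
    push_cast at hN
    simp only [g, f]
    rw [sub_le_iff_le_add, ← add_div, le_div_iff₀ (by positivity),
      inv_mul_le_iff₀ (by positivity)]
    nlinarith
  have hf_le_one : ∀ N, f N ≤ 1 := fun N =>
    div_le_one_of_le₀ (by exact_mod_cast (card_filter_le _ _).trans (card_range _).le)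
      (by positivity)
  have hg : Tendsto g atTop (𝓝 (q : ℝ)⁻¹) := by
    simpa only [sub_zero] using
      (tendsto_const_nhds (x := (q : ℝ)⁻¹)).sub tendsto_one_div_add_atTop_nhds_zero_nat
  calc (q : ℝ)⁻¹ = liminf g atTop := hg.liminf_eq.symm
    _ ≤ liminf f atTop := liminf_le_liminf (Eventually.of_forall hgf) hg.isBoundedUnder_ge
        (isBoundedUnder_of ⟨1, hf_le_one⟩).isCoboundedUnder_ge

theorem lowerDensity_r_ell (m : ℕ) (hm : 1 ≤ m) :
    0 < lowerDensity {x | ∃ n : ℕ, 0 < n ∧ ell n = m ∧ r n = x} ∧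
    ((2 : ℝ) ^ (m + 1))⁻¹ ≤ lowerDensity {x | ∃ n : ℕ, 0 < n ∧ ell n = m ∧ r n = x} := by
  obtain ⟨k, rfl⟩ : ∃ k, m = k + 1 := ⟨m - 1, by omega⟩
  have h := inv_le_lowerDensity_of_div_le_card (by positivity) (div_le_card_filter_r_of_ell_eq k)
  push_cast at h
  exact ⟨(by positivity : (0 : ℝ) < _).trans_le h, h⟩
end

section
/- Let X be a complete metric space and (F, d) a metric space, with maps ω_n : X → F continuous for each n. The set of x ∈ X such that for every nonempty open V ⊆ F the set {n : ω_n(x) ∈ V} has upper density 1 is a G_δ subset of X. -/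
open scoped Classical

namespace DensityAux

noncomputable def dens (A : Set ℕ) (N : ℕ) : ℝ :=
  (((Finset.range (N + 1)).filter (fun n => n ∈ A)).card : ℝ) / (N + 1)

lemma dens_nonneg (A : Set ℕ) (N : ℕ) : 0 ≤ dens A N :=
  div_nonneg (Nat.cast_nonneg _) (by positivity)

lemma dens_le_one (A : Set ℕ) (N : ℕ) : dens A N ≤ 1 := by
  rw [dens, div_le_one (by positivity)]
  calc (((Finset.range (N + 1)).filter (fun n => n ∈ A)).card : ℝ)
      ≤ ((Finset.range (N + 1)).card : ℝ) := by
        exact_mod_cast Finset.card_filter_le _ _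
    _ = (N + 1 : ℝ) := by simp
    _ ≤ (N : ℝ) + 1 := by norm_num

lemma bdd (A : Set ℕ) : Filter.atTop.IsBoundedUnder (· ≤ ·) (dens A) :=
  Filter.isBoundedUnder_of ⟨1, dens_le_one A⟩

lemma cobdd (A : Set ℕ) : Filter.atTop.IsCoboundedUnder (· ≤ ·) (dens A) :=
  Filter.isCoboundedUnder_le_of_le _ (dens_nonneg A)

lemma upperDensity_eq (A : Set ℕ) : upperDensity A = Filter.atTop.limsup (dens A) := rfl

lemma upperDensity_le_one (A : Set ℕ) : upperDensity A ≤ 1 := by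
  rw [upperDensity_eq]
  exact Filter.limsup_le_of_le (cobdd A) (Filter.Eventually.of_forall (dens_le_one A))

lemma upperDensity_mono {A B : Set ℕ} (h : A ⊆ B) : upperDensity A ≤ upperDensity B := by
  rw [upperDensity_eq, upperDensity_eq]
  refine Filter.limsup_le_limsup (Filter.Eventually.of_forall fun N => ?_) (cobdd A) (bdd B)
  refine div_le_div_of_nonneg_right ?_ (by positivity)
  have hsub : (Finset.range (N + 1)).filter (fun n => n ∈ A)
      ⊆ (Finset.range (N + 1)).filter (fun n => n ∈ B) := fun n hn => by
    rw [Finset.mem_filter] at hn ⊢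
    exact ⟨hn.1, h hn.2⟩
  exact_mod_cast Finset.card_le_card hsub

lemma upperDensity_eq_one_iff (A : Set ℕ) :
    upperDensity A = 1 ↔ ∀ k : ℕ, ∀ N : ℕ, ∃ M ≥ N, 1 - 1 / (k + 1) < dens A M := by
  constructor
  · intro h k N
    have h1 : (1 : ℝ) ≤ Filter.atTop.limsup (dens A) := by rw [← upperDensity_eq, h]
    have := (Filter.le_limsup_iff (cobdd A) (bdd A)).1 h1 (1 - 1 / (k + 1))
      (by
        have : (0:ℝ) < 1 / (k + 1) := by positivity
        linarith)
    exact (Filter.frequently_atTop.1 this) N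
  · intro h
    refine le_antisymm (upperDensity_le_one A) ?_
    rw [upperDensity_eq]
    rw [Filter.le_limsup_iff (cobdd A) (bdd A)]
    intro y hy
    obtain ⟨k, hk⟩ := exists_nat_one_div_lt (show (0:ℝ) < 1 - y by linarith)
    refine Filter.frequently_atTop.2 fun N => ?_
    obtain ⟨M, hM, hM'⟩ := h k N
    exact ⟨M, hM, by linarith⟩

end DensityAux

open DensityAux

lemma isOpen_card_gt {X F : Type*} [TopologicalSpace X] [TopologicalSpace F]
    (ω : ℕ → X → F) (hω : ∀ n, Continuous (ω n)) (U : Set F) (hU : IsOpen U)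
    (m : ℕ) (c : ℝ) :
    IsOpen {x : X | c < (((Finset.range m).filter (fun n => ω n x ∈ U)).card : ℝ)} := by
  have : {x : X | c < (((Finset.range m).filter (fun n => ω n x ∈ U)).card : ℝ)}
      = ⋃ (S : Finset ℕ) (_ : S ⊆ Finset.range m ∧ c < (S.card : ℝ)),
          ⋂ n ∈ S, (ω n) ⁻¹' U := by
    ext x
    simp only [Set.mem_setOf_eq, Set.mem_iUnion, Set.mem_iInter, Set.mem_preimage]
    constructor
    · intro h
      exact ⟨(Finset.range m).filter (fun n => ω n x ∈ U),
        ⟨Finset.filter_subset _ _, h⟩, fun n hn => (Finset.mem_filter.1 hn).2⟩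
    · rintro ⟨S, ⟨hSm, hSc⟩, hS⟩
      refine lt_of_lt_of_le hSc ?_
      exact_mod_cast Finset.card_le_card fun n hn =>
        Finset.mem_filter.2 ⟨hSm hn, hS n hn⟩
  rw [this]
  refine isOpen_iUnion fun S => isOpen_iUnion fun _ => ?_
  exact isOpen_biInter_finset fun n _ => (hU.preimage (hω n))

lemma isGdelta_aux {X F : Type*} [TopologicalSpace X] [TopologicalSpace F]
    (ω : ℕ → X → F) (hω : ∀ n, Continuous (ω n)) (U : Set F) (hU : IsOpen U) :
    IsGδ {x : X | upperDensity {n | ω n x ∈ U} = 1} := by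
  have key : {x : X | upperDensity {n | ω n x ∈ U} = 1}
      = ⋂ (k : ℕ) (N : ℕ), ⋃ (M : ℕ) (_ : M ≥ N),
          {x : X | (1 - 1 / (k + 1)) * (M + 1)
            < (((Finset.range (M + 1)).filter (fun n => ω n x ∈ U)).card : ℝ)} := by
    ext x
    simp only [Set.mem_setOf_eq, Set.mem_iInter, Set.mem_iUnion]
    rw [upperDensity_eq_one_iff]
    apply forall_congr'; intro k
    apply forall_congr'; intro N
    apply exists_congr; intro M
    rw [exists_prop]
    apply and_congr_right; intro _
    rw [dens, lt_div_iff₀ (by positivity)]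
    simp only [Set.mem_setOf_eq]
  rw [key]
  refine .iInter fun k => .iInter fun N => IsOpen.isGδ ?_
  exact isOpen_iUnion fun M => isOpen_iUnion fun _ =>
    isOpen_card_gt ω hω U hU _ _

theorem isGdelta_full_upperDensity {X F : Type*} [MetricSpace X] [CompleteSpace X]
    [MetricSpace F] [TopologicalSpace.SeparableSpace F]
    (ω : ℕ → X → F) (hω : ∀ n, Continuous (ω n)) :
    IsGδ {x : X | ∀ V : Set F, IsOpen V → V.Nonempty →
      upperDensity {n | ω n x ∈ V} = 1} := by
  haveI : SecondCountableTopology F :=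
    UniformSpace.secondCountable_of_separable F
  obtain ⟨B, hBc, -, hB⟩ := TopologicalSpace.exists_countable_basis F
  have key : {x : X | ∀ V : Set F, IsOpen V → V.Nonempty →
      upperDensity {n | ω n x ∈ V} = 1}
      = ⋂ U ∈ {U ∈ B | U.Nonempty}, {x : X | upperDensity {n | ω n x ∈ U} = 1} := by
    ext x
    simp only [Set.mem_setOf_eq, Set.mem_iInter, Set.mem_sep_iff]
    constructor
    · rintro h U ⟨hUB, hUne⟩
      exact h U (hB.isOpen hUB) hUne
    · intro h V hV ⟨v, hv⟩
      obtain ⟨U, hUB, hvU, hUV⟩ := hB.exists_subset_of_mem_open hv hV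
      refine le_antisymm (upperDensity_le_one _) ?_
      calc (1:ℝ) = upperDensity {n | ω n x ∈ U} := (h U ⟨hUB, ⟨v, hvU⟩⟩).symm
        _ ≤ upperDensity {n | ω n x ∈ V} :=
            upperDensity_mono fun n hn => hUV hn
  rw [key]
  exact .biInter (hBc.mono (Set.sep_subset _ _)) fun U hU =>
    isGdelta_aux ω hω U (hB.isOpen hU.1)
end
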